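/- For all integers n ≥ 1 and m ≥ 1, the Fuss number decomposes as a sum over parabolic subsystems: (1/(n+1))·C((n+1)(m+1), n) = Σ_{J ⊆ {1,…,n}} Π_B N⁺(|B|, m), where B ranges over the maximal blocks of consecutive integers contained in J (the empty product, for J = ∅, equals 1). -/

import Mathlib

/-- The binomial coefficient `C(a, b)` for integers `a, b`, with the convention
that it vanishes unless `0 ≤ b ≤ a`. -/
def cc (a b : ℤ) : ℚ :=
  if 0 ≤ b ∧ b ≤ a then (a.toNat.choose b.toNat : ℚ) else 0

/-- The positive Fuss–Catalan number `N⁺(j, m) = (1/(j+1))·C((j+1)m+j−1, j)`,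
counting the maximal simplices of the generalized cluster complex `Δ^m(A_j)`
which involve only positive colored roots. -/
def Nplus (j m : ℕ) : ℚ :=
  1 / ((j : ℚ) + 1) * cc (((j : ℤ) + 1) * m + j - 1) j

/-- `B` is a maximal block of consecutive integers contained in `J`. -/
def IsMaxBlock (J B : Finset ℕ) : Prop :=
  ∃ a b : ℕ, a ≤ b ∧ B = Finset.Icc a b ∧ B ⊆ J ∧ (a - 1) ∉ J ∧ (b + 1) ∉ J

open Finset

/-- The Raney number `(r/(np+r)) C(np+r, n)` (with value 1 at `n = 0`). -/
def Ran (p r n : ℕ) : ℚ :=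
  if n = 0 then 1 else (r : ℚ) / (n*p + r) * ((n*p + r).choose n)

lemma Ran_zero (p r : ℕ) : Ran p r 0 = 1 := rfl

lemma Ran_zero_r (p n : ℕ) (hn : n ≠ 0) : Ran p 0 n = 0 := by
  simp [Ran, hn]

lemma choose_cast_mul (r k : ℕ) (hk : 1 ≤ k) :
    (k : ℚ) * r.choose k = r * (r-1).choose (k-1) := by
  obtain ⟨k, rfl⟩ := Nat.exists_eq_add_of_le hk
  cases r with
  | zero => simp [Nat.choose_eq_zero_of_lt (by omega : (0:ℕ) < 1 + k)]
  | succ r =>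
    have h := Nat.add_one_mul_choose_eq r k
    have h1 : 1 + k = k + 1 := by omega
    have h2 : r + 1 - 1 = r := by omega
    have h3 : k + 1 - 1 = k := by omega
    rw [h1, h2, h3]
    have := congrArg (Nat.cast (R := ℚ)) h
    push_cast at this
    push_cast; linarith [this]

lemma choose_succ_cancel (a n : ℕ) (hn : 1 ≤ n) :
    ((a : ℚ) + 1) * (a.choose (n-1)) = n * ((a+1).choose n) := by
  obtain ⟨n, rfl⟩ := Nat.exists_eq_add_of_le hn
  have h := Nat.add_one_mul_choose_eq a n
  have h1 : 1 + n - 1 = n := by omega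
  have h2 : 1 + n = n + 1 := by omega
  rw [h1, h2]
  have := congrArg (Nat.cast (R := ℚ)) h
  push_cast at this
  push_cast; linarith [this]

lemma ran_eq_sum (p r n : ℕ) (hp : 1 ≤ p) :
    Ran p r n = ∑ k ∈ range (n+1), (r.choose k : ℚ) * Ran p (p*k) (n-k) := by
  rcases Nat.eq_zero_or_pos n with rfl | hn
  · simp [Ran]
  have hn0 : (n:ℚ) ≠ 0 := Nat.cast_ne_zero.mpr hn.ne'
  have hp0 : (p:ℚ) ≠ 0 := Nat.cast_ne_zero.mpr (by omega)
  rw [Finset.sum_range_succ']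
  have h0 : (r.choose 0 : ℚ) * Ran p (p*0) (n-0) = 0 := by
    simp [Ran, hn.ne']
  rw [h0, add_zero]
  have hterm : ∀ i ∈ range n, (r.choose (i+1) : ℚ) * Ran p (p*(i+1)) (n-(i+1))
      = (r:ℚ)/n * (((r-1).choose i : ℚ) * ((n*p).choose (n-1-i))) := by
    intro i hi
    rw [mem_range] at hi
    have hsub : n - (i+1) = n-1-i := by omega
    have hkey := choose_cast_mul r (i+1) (by omega)
    rw [Nat.add_sub_cancel] at hkey
    rw [hsub]
    rcases Nat.eq_zero_or_pos (n-1-i) with h | h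
    · have hi' : (i:ℚ) + 1 = n := by
        have : i + 1 = n := by omega
        exact_mod_cast congrArg (Nat.cast (R := ℚ)) this
      rw [h, Ran_zero, mul_one, Nat.choose_zero_right]
      push_cast
      rw [mul_one]
      field_simp
      rw [← hi']
      push_cast at hkey
      linear_combination hkey
    · have hq : (n-1-i)*p + p*(i+1) = n*p := by
        rw [mul_comm p (i+1), ← Nat.add_mul]
        congr 1
        omega
      rw [Ran, if_neg h.ne']
      rw [show ((n-1-i : ℕ):ℚ) * (p:ℚ) + ((p*(i+1) : ℕ):ℚ) = ((n*p : ℕ):ℚ) by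
        rw [← hq]; push_cast; ring]
      rw [hq]
      have hnp0 : ((n*p:ℕ):ℚ) ≠ 0 := by
        push_cast; exact mul_ne_zero hn0 hp0
      field_simp
      push_cast
      push_cast at hkey
      linear_combination ((p:ℚ) * ((n*p).choose (n-1-i)) * n) * hkey
  rw [Finset.sum_congr rfl hterm, ← Finset.mul_sum]
  have hv : ∑ i ∈ range n, (((r-1).choose i : ℚ) * ((n*p).choose (n-1-i)))
      = (((r-1)+n*p).choose (n-1) : ℚ) := by
    have hvd := Nat.add_choose_eq (r-1) (n*p) (n-1)
    rw [Finset.Nat.sum_antidiagonal_eq_sum_range_succ_mk] at hvd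
    rw [Nat.succ_eq_add_one, show n - 1 + 1 = n from by omega] at hvd
    rw [hvd]
    push_cast
    rfl
  rw [hv]
  rcases Nat.eq_zero_or_pos r with rfl | hr
  · simp [Ran, hn.ne']
  · rw [Ran, if_neg hn.ne']
    have key := choose_succ_cancel (n*p+r-1) n hn
    have hc1 : (((n*p+r-1:ℕ)):ℚ) + 1 = (n:ℚ)*p + r := by
      have : ((n*p+r-1:ℕ):ℚ) = ((n*p+r:ℕ):ℚ) - 1 := by
        rw [Nat.cast_sub (by omega)]; simp
      rw [this]; push_cast; ring
    have hc2 : n*p+r-1+1 = n*p+r := by omega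
    rw [hc1, hc2] at key
    have hc3 : r - 1 + n*p = n*p+r-1 := by omega
    rw [hc3]
    have hd : (n:ℚ)*p + r ≠ 0 := by positivity
    field_simp
    nlinarith [key]

lemma vand_regroup (r s : ℕ) (f : ℕ → ℚ) :
    ∑ i ∈ range (r+1), ∑ j ∈ range (s+1), (r.choose i : ℚ) * (s.choose j : ℚ) * f (i+j)
      = ∑ t ∈ range (r+s+1), ((r+s).choose t : ℚ) * f t := by
  have h1 : ∀ i, ∑ j ∈ range (s+1), (r.choose i : ℚ) * (s.choose j : ℚ) * f (i+j)
      = ∑ j ∈ range (r+s+1), (r.choose i : ℚ) * (s.choose j : ℚ) * f (i+j) := by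
    intro i
    apply Finset.sum_subset
    · intro x hx; rw [mem_range] at *; omega
    · intro x _ hx
      rw [mem_range, not_lt] at hx
      simp [Nat.choose_eq_zero_of_lt (by omega : s < x)]
  have h2 : ∑ i ∈ range (r+1), ∑ j ∈ range (r+s+1), (r.choose i : ℚ) * (s.choose j : ℚ) * f (i+j)
      = ∑ i ∈ range (r+s+1), ∑ j ∈ range (r+s+1), (r.choose i : ℚ) * (s.choose j : ℚ) * f (i+j) := by
    apply Finset.sum_subset
    · intro x hx; rw [mem_range] at *; omega
    · intro x _ hx
      rw [mem_range, not_lt] at hx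
      apply Finset.sum_eq_zero
      intro j _
      simp [Nat.choose_eq_zero_of_lt (by omega : r < x)]
  calc ∑ i ∈ range (r+1), ∑ j ∈ range (s+1), (r.choose i : ℚ) * (s.choose j : ℚ) * f (i+j)
      = ∑ i ∈ range (r+s+1), ∑ j ∈ range (r+s+1),
          (r.choose i : ℚ) * (s.choose j : ℚ) * f (i+j) := by
        rw [← h2]; exact Finset.sum_congr rfl fun i _ => h1 i
    _ = ∑ q ∈ (range (r+s+1)) ×ˢ (range (r+s+1)),
          (r.choose q.1 : ℚ) * (s.choose q.2 : ℚ) * f (q.1+q.2) := by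
        rw [Finset.sum_product]
    _ = ∑ q ∈ ((range (r+s+1)) ×ˢ (range (r+s+1))).filter (fun q => q.1 + q.2 < r+s+1),
          (r.choose q.1 : ℚ) * (s.choose q.2 : ℚ) * f (q.1+q.2) := by
        rw [Finset.sum_filter_of_ne]
        intro q hq hne
        by_contra hc
        rw [Finset.mem_product, mem_range, mem_range] at hq
        rcases Nat.lt_or_ge r q.1 with h | h
        · exact hne (by simp [Nat.choose_eq_zero_of_lt h])
        · exact hne (by simp [Nat.choose_eq_zero_of_lt (by omega : s < q.2)])
    _ = ∑ x ∈ (range (r+s+1)).sigma (fun t => range (t+1)),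
          (r.choose x.2 : ℚ) * (s.choose (x.1 - x.2) : ℚ) * f x.1 := by
        apply Finset.sum_nbij' (i := fun q => ⟨q.1 + q.2, q.1⟩)
          (j := fun x => (x.2, x.1 - x.2))
        · intro q hq
          simp only [Finset.mem_filter, Finset.mem_product, mem_range] at hq
          simp only [Finset.mem_sigma, mem_range]
          omega
        · intro x hx
          simp only [Finset.mem_sigma, mem_range] at hx
          simp only [Finset.mem_filter, Finset.mem_product, mem_range]
          omega
        · intro q hq; simp
        · rintro ⟨t, k⟩ hx
          simp only [Finset.mem_sigma, mem_range] at hx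
          have hkt : k + (t - k) = t := by omega
          simp [hkt]
        · intro q hq
          simp [Nat.add_sub_cancel_left]
    _ = ∑ t ∈ range (r+s+1), ∑ k ∈ range (t+1),
          (r.choose k : ℚ) * (s.choose (t - k) : ℚ) * f t := by
        rw [Finset.sum_sigma]
    _ = ∑ t ∈ range (r+s+1), ((r+s).choose t : ℚ) * f t := by
        apply Finset.sum_congr rfl
        intro t _
        have hvd := Nat.add_choose_eq r s t
        rw [Finset.Nat.sum_antidiagonal_eq_sum_range_succ_mk] at hvd
        rw [← Finset.sum_mul]
        congr 1
        rw [hvd]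
        push_cast
        rfl

noncomputable def S (p r : ℕ) : PowerSeries ℚ := PowerSeries.mk (Ran p r)

lemma coeff_S (p r n : ℕ) : PowerSeries.coeff n (S p r) = Ran p r n :=
  PowerSeries.coeff_mk n _

lemma S_zero (p : ℕ) : S p 0 = 1 := by
  ext n
  rw [coeff_S, PowerSeries.coeff_one]
  by_cases hn : n = 0
  · simp [hn, Ran_zero]
  · simp [hn, Ran_zero_r p n hn]

lemma ran_eq_sum' (p r n : ℕ) (hp : 1 ≤ p) :
    Ran p r n = ∑ k ∈ range (r+1),
      (r.choose k : ℚ) * (if k ≤ n then Ran p (p*k) (n-k) else 0) := by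
  rw [ran_eq_sum p r n hp]
  have e1 : ∑ k ∈ range (n+1), (r.choose k:ℚ) * Ran p (p*k) (n-k)
      = ∑ k ∈ range (n+1), (r.choose k:ℚ) * (if k ≤ n then Ran p (p*k) (n-k) else 0) := by
    apply Finset.sum_congr rfl
    intro k hk
    rw [mem_range] at hk
    rw [if_pos (by omega)]
  rw [e1]
  have e2 : ∑ k ∈ range (n+1), (r.choose k:ℚ) * (if k ≤ n then Ran p (p*k) (n-k) else 0)
      = ∑ k ∈ range (n+r+1), (r.choose k:ℚ) * (if k ≤ n then Ran p (p*k) (n-k) else 0) := by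
    apply Finset.sum_subset
    · intro x hx; rw [mem_range] at *; omega
    · intro x _ hx
      rw [mem_range, not_lt] at hx
      rw [if_neg (by omega), mul_zero]
  have e3 : ∑ k ∈ range (r+1), (r.choose k:ℚ) * (if k ≤ n then Ran p (p*k) (n-k) else 0)
      = ∑ k ∈ range (n+r+1), (r.choose k:ℚ) * (if k ≤ n then Ran p (p*k) (n-k) else 0) := by
    apply Finset.sum_subset
    · intro x hx; rw [mem_range] at *; omega
    · intro x _ hx
      rw [mem_range, not_lt] at hx
      rw [Nat.choose_eq_zero_of_lt (by omega), Nat.cast_zero, zero_mul]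
  rw [e2, ← e3]

lemma S_eq (p r : ℕ) (hp : 1 ≤ p) :
    S p r = ∑ k ∈ range (r+1), (r.choose k : ℚ) • (PowerSeries.X^k * S p (p*k)) := by
  ext n
  rw [coeff_S, map_sum, ran_eq_sum' p r n hp]
  apply Finset.sum_congr rfl
  intro k _
  rw [LinearMap.map_smul, smul_eq_mul, PowerSeries.coeff_X_pow_mul', coeff_S]

theorem conv (p : ℕ) (hp : 1 ≤ p) :
    ∀ n r s : ℕ, PowerSeries.coeff n (S p r * S p s) = Ran p (r+s) n := by
  intro n
  induction n using Nat.strong_induction_on with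
  | _ n IH =>
  intro r s
  rw [S_eq p r hp, S_eq p s hp, Finset.sum_mul_sum, map_sum]
  have hterm : ∀ i ∈ range (r+1),
      (PowerSeries.coeff n) (∑ j ∈ range (s+1),
        ((r.choose i:ℚ) • (PowerSeries.X^i * S p (p*i)))
          * ((s.choose j:ℚ) • (PowerSeries.X^j * S p (p*j))))
      = ∑ j ∈ range (s+1), (r.choose i : ℚ) * (s.choose j : ℚ)
          * (if i+j ≤ n then Ran p (p*(i+j)) (n-(i+j)) else 0) := by
    intro i _
    rw [map_sum]
    apply Finset.sum_congr rfl
    intro j _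
    rw [smul_mul_smul_comm]
    rw [show (PowerSeries.X^i * S p (p*i)) * (PowerSeries.X^j * S p (p*j))
        = PowerSeries.X^(i+j) * (S p (p*i) * S p (p*j)) by rw [pow_add]; ring]
    rw [LinearMap.map_smul, smul_eq_mul, PowerSeries.coeff_X_pow_mul']
    congr 1
    by_cases hij : i + j ≤ n
    · rw [if_pos hij, if_pos hij]
      rcases Nat.eq_zero_or_pos (i+j) with h0 | h1
      · have hi : i = 0 := by omega
        have hj : j = 0 := by omega
        subst hi; subst hj
        simp only [Nat.add_zero, Nat.mul_zero, Nat.sub_zero]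
        rw [S_zero, mul_one, PowerSeries.coeff_one]
        by_cases hn : n = 0
        · simp [hn, Ran_zero]
        · simp [hn, Ran_zero_r p n hn]
      · rw [IH (n - (i+j)) (by omega)]
        congr 1
        ring
    · rw [if_neg hij, if_neg hij]
  rw [Finset.sum_congr rfl hterm]
  have hv := vand_regroup r s (fun t => if t ≤ n then Ran p (p*t) (n-t) else 0)
  rw [hv, ran_eq_sum' p (r+s) n hp]

lemma ran_one (p j : ℕ) (hp : 1 ≤ p) (hj : 1 ≤ j) : Ran p 1 j = Ran p p (j-1) := by
  rw [ran_eq_sum p 1 j hp]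
  rw [Finset.sum_eq_single_of_mem 1 (by rw [mem_range]; omega)]
  · simp
  · intro k _ hk
    rcases Nat.eq_zero_or_pos k with rfl | hk1
    · simp [Ran_zero_r p j (by omega)]
    · rw [Nat.choose_eq_zero_of_lt (by omega), Nat.cast_zero, zero_mul]

lemma ran_rec (m n : ℕ) (hn : 1 ≤ n) :
    Ran (m+1) (m+1) n
      = Ran (m+1) m n + ∑ t ∈ range n, Ran (m+1) m t * Ran (m+1) (m+1) (n-1-t) := by
  have hp : 1 ≤ m + 1 := by omega
  have h := conv (m+1) hp n m 1
  rw [PowerSeries.coeff_mul, Finset.Nat.sum_antidiagonal_eq_sum_range_succ_mk] at h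
  simp only [coeff_S] at h
  rw [← h, Finset.sum_range_succ, Nat.sub_self, Ran_zero, mul_one, add_comm]
  congr 1
  apply Finset.sum_congr rfl
  intro t ht
  rw [mem_range] at ht
  rw [ran_one (m+1) (n-t) hp (by omega), show n - t - 1 = n - 1 - t from by omega]

lemma nplus_eq (m t : ℕ) (hm : 1 ≤ m) : Nplus t m = Ran (m+1) m t := by
  rcases Nat.eq_zero_or_pos t with rfl | ht
  · rw [Nplus, Ran_zero, cc]
    rw [if_pos ⟨le_refl 0, by push_cast; omega⟩]
    simp
  · have hta : t ≤ t*(m+1) := Nat.le_mul_of_pos_right t (by omega)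
    have ha1 : 1 ≤ t*(m+1)+m := le_trans hm (Nat.le_add_left m _)
    have hA : ((t:ℤ)+1) * m + t - 1 = ((t*(m+1)+m-1 : ℕ) : ℤ) := by
      push_cast [Nat.cast_sub ha1]
      ring
    have hm' : (1:ℤ) ≤ (m:ℤ) := by exact_mod_cast hm
    have ht' : (0:ℤ) ≤ (t:ℤ) := Int.ofNat_nonneg t
    have hbound : (t:ℤ) ≤ ((t:ℤ)+1)*m + t - 1 := by nlinarith
    rw [Nplus, cc, if_pos ⟨Int.ofNat_nonneg t, hbound⟩, hA, Int.toNat_natCast,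
      Int.toNat_natCast]
    rw [Ran, if_neg ht.ne']
    have key := Nat.choose_mul_succ_eq (t*(m+1)+m-1) t
    rw [Nat.sub_add_cancel ha1] at key
    have keyq := congrArg (Nat.cast (R := ℚ)) key
    push_cast [Nat.cast_sub (le_trans hta (Nat.le_add_right _ m) : t ≤ t*(m+1)+m),
      Nat.cast_sub ha1] at keyq
    push_cast
    have hmq : (1:ℚ) ≤ (m:ℚ) := by exact_mod_cast hm
    have htq : (0:ℚ) ≤ (t:ℚ) := by positivity
    have hane : (t:ℚ)*((m:ℚ)+1)+(m:ℚ) ≠ 0 := by nlinarith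
    have htne : (t:ℚ) + 1 ≠ 0 := by positivity
    field_simp
    linear_combination keyq

lemma ran_rec' (m n : ℕ) (hm : 1 ≤ m) (hn : 1 ≤ n) :
    Ran (m+1) (m+1) n
      = Nplus n m + ∑ t ∈ range n, Nplus t m * Ran (m+1) (m+1) (n-1-t) := by
  rw [ran_rec m n hn, nplus_eq m n hm]
  congr 1
  apply Finset.sum_congr rfl
  intro t _
  rw [nplus_eq m t hm]

lemma fuss_eq (n m : ℕ) :
    1/((n:ℚ)+1) * (((n+1)*(m+1)).choose n) = Ran (m+1) (m+1) n := by
  rcases Nat.eq_zero_or_pos n with rfl | hn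
  · simp [Ran_zero]
  · rw [Ran, if_neg hn.ne']
    rw [show n*(m+1)+(m+1) = (n+1)*(m+1) from by ring]
    have h1 : ((n:ℚ)*((m:ℚ)+1) + ((m:ℚ)+1)) = ((n:ℚ)+1)*((m:ℚ)+1) := by ring
    push_cast
    rw [h1]
    have hm1 : ((m:ℚ)+1) ≠ 0 := by positivity
    have hn1 : ((n:ℚ)+1) ≠ 0 := by positivity
    field_simp

open scoped Classical

noncomputable def W (m : ℕ) (J : Finset ℕ) : ℚ :=
  ∏ B ∈ J.powerset.filter (fun B => IsMaxBlock J B), Nplus B.card m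

noncomputable def G (m n : ℕ) : ℚ := ∑ J ∈ (Finset.Icc 1 n).powerset, W m J

lemma W_empty (m : ℕ) : W m ∅ = 1 := by
  rw [W]
  rw [Finset.prod_eq_one]
  intro B hB
  rw [Finset.mem_filter] at hB
  obtain ⟨a, b, hab, hBab, hsub, -, -⟩ := hB.2
  exfalso
  exact absurd (hsub (hBab ▸ Finset.mem_Icc.mpr ⟨le_refl a, hab⟩)) (Finset.notMem_empty a)

lemma G_zero (m : ℕ) : G m 0 = 1 := by
  rw [G]
  rw [show Finset.Icc 1 0 = (∅ : Finset ℕ) from by simp]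
  rw [Finset.powerset_empty, Finset.sum_singleton, W_empty]

lemma isMaxBlock_image (J B : Finset ℕ) (hJ : ∀ x ∈ J, 1 ≤ x) (c : ℕ)
    (hB : IsMaxBlock J B) : IsMaxBlock (J.image (· + c)) (B.image (· + c)) := by
  obtain ⟨a, b, hab, rfl, hsub, ha, hb⟩ := hB
  have ha1 : 1 ≤ a := hJ a (hsub (Finset.mem_Icc.mpr ⟨le_refl a, hab⟩))
  refine ⟨a + c, b + c, by omega, ?_, ?_, ?_, ?_⟩
  · ext x
    simp only [Finset.mem_image, Finset.mem_Icc]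
    constructor
    · rintro ⟨y, hy, rfl⟩; omega
    · rintro ⟨h1, h2⟩; exact ⟨x - c, by omega, by omega⟩
  · exact Finset.image_subset_image hsub
  · intro hmem
    simp only [Finset.mem_image] at hmem
    obtain ⟨y, hy, hyc⟩ := hmem
    have : y = a - 1 := by omega
    exact ha (this ▸ hy)
  · intro hmem
    simp only [Finset.mem_image] at hmem
    obtain ⟨y, hy, hyc⟩ := hmem
    have : y = b + 1 := by omega
    exact hb (this ▸ hy)

lemma maxBlocks_image (J : Finset ℕ) (hJ : ∀ x ∈ J, 1 ≤ x) (c : ℕ) :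
    ((J.image (· + c)).powerset.filter (fun B => IsMaxBlock (J.image (· + c)) B))
      = (J.powerset.filter (fun B => IsMaxBlock J B)).image (fun B => B.image (· + c)) := by
  ext B'
  simp only [Finset.mem_filter, Finset.mem_powerset, Finset.mem_image]
  constructor
  · rintro ⟨hsub', hmb'⟩
    obtain ⟨a', b', hab', rfl, hsubI, ha', hb'⟩ := hmb'
    have hac : c + 1 ≤ a' := by
      have ha'mem : a' ∈ J.image (· + c) := hsubI (Finset.mem_Icc.mpr ⟨le_refl a', hab'⟩)
      simp only [Finset.mem_image] at ha'mem
      obtain ⟨y, hy, hyc⟩ := ha'mem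
      have := hJ y hy
      omega
    refine ⟨Finset.Icc (a' - c) (b' - c), ⟨?_, ?_⟩, ?_⟩
    · intro x hx
      rw [Finset.mem_Icc] at hx
      have : x + c ∈ J.image (· + c) := hsubI (Finset.mem_Icc.mpr ⟨by omega, by omega⟩)
      simp only [Finset.mem_image] at this
      obtain ⟨y, hy, hyc⟩ := this
      have : y = x := by omega
      exact this ▸ hy
    · refine ⟨a' - c, b' - c, by omega, rfl, ?_, ?_, ?_⟩
      · intro x hx
        rw [Finset.mem_Icc] at hx
        have : x + c ∈ J.image (· + c) := hsubI (Finset.mem_Icc.mpr ⟨by omega, by omega⟩)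
        simp only [Finset.mem_image] at this
        obtain ⟨y, hy, hyc⟩ := this
        have : y = x := by omega
        exact this ▸ hy
      · intro hmem
        apply ha'
        simp only [Finset.mem_image]
        exact ⟨a' - c - 1, hmem, by omega⟩
      · intro hmem
        apply hb'
        simp only [Finset.mem_image]
        exact ⟨b' - c + 1, hmem, by omega⟩
    · ext x
      simp only [Finset.mem_image, Finset.mem_Icc]
      constructor
      · rintro ⟨y, ⟨h1, h2⟩, rfl⟩; omega
      · intro ⟨h1, h2⟩; exact ⟨x - c, ⟨by omega, by omega⟩, by omega⟩
  · rintro ⟨B, ⟨hsub, hmb⟩, rfl⟩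
    exact ⟨Finset.image_subset_image hsub, isMaxBlock_image J B hJ c hmb⟩

lemma W_image (m : ℕ) (J : Finset ℕ) (hJ : ∀ x ∈ J, 1 ≤ x) (c : ℕ) :
    W m (J.image (· + c)) = W m J := by
  rw [W, W, maxBlocks_image J hJ c]
  rw [Finset.prod_image]
  · apply Finset.prod_congr rfl
    intro B _
    rw [Finset.card_image_of_injective _ (add_left_injective c)]
  · intro B _ B' _ h
    exact Finset.image_injective (add_left_injective c) h

lemma maxBlocks_union (t : ℕ) (ht : 1 ≤ t) (K : Finset ℕ) (hK : ∀ x ∈ K, t+2 ≤ x) :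
    ((Finset.Icc 1 t ∪ K).powerset.filter
        (fun B => IsMaxBlock (Finset.Icc 1 t ∪ K) B))
      = insert (Finset.Icc 1 t) (K.powerset.filter (fun B => IsMaxBlock K B)) := by
  have hmemJ : ∀ x, x ∈ Finset.Icc 1 t ∪ K ↔ ((1 ≤ x ∧ x ≤ t) ∨ x ∈ K) := by
    intro x
    simp [Finset.mem_union, Finset.mem_Icc]
  ext B
  simp only [Finset.mem_filter, Finset.mem_powerset, Finset.mem_insert]
  constructor
  · rintro ⟨hsub, a, b, hab, rfl, hsubJ, ha, hb⟩
    have haJ : a ∈ Finset.Icc 1 t ∪ K := hsubJ (Finset.mem_Icc.mpr ⟨le_refl a, hab⟩)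
    have hbJ : b ∈ Finset.Icc 1 t ∪ K := hsubJ (Finset.mem_Icc.mpr ⟨hab, le_refl b⟩)
    have ht1 : (t+1) ∉ Finset.Icc 1 t ∪ K := by
      rw [hmemJ]
      push_neg
      exact ⟨fun _ => by omega, fun h => by have := hK _ h; omega⟩
    rcases Nat.lt_or_ge a (t+2) with hlt | hge
    · left
      have ha1 : a = 1 := by
        rcases (hmemJ a).mp haJ with h | h
        · by_contra hne
          apply ha
          rw [hmemJ]
          left
          omega
        · have := hK a h; omega
      have hbt : b = t := by
        rcases Nat.lt_trichotomy b t with h | h | h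
        · exfalso
          apply hb
          rw [hmemJ]
          left
          omega
        · exact h
        · exfalso
          apply ht1
          apply hsubJ
          rw [Finset.mem_Icc]
          omega
      rw [ha1, hbt]
    · right
      have hBK : Finset.Icc a b ⊆ K := by
        intro x hx
        rw [Finset.mem_Icc] at hx
        rcases (hmemJ x).mp (hsubJ (Finset.mem_Icc.mpr hx)) with h | h
        · omega
        · exact h
      refine ⟨hBK, a, b, hab, rfl, hBK, ?_, ?_⟩
      · intro h
        exact ha ((hmemJ (a-1)).mpr (Or.inr h))
      · intro h
        exact hb ((hmemJ (b+1)).mpr (Or.inr h))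
  · rintro (rfl | ⟨hsub, a, b, hab, rfl, hsubK, ha, hb⟩)
    · refine ⟨Finset.subset_union_left, 1, t, ht, rfl, Finset.subset_union_left, ?_, ?_⟩
      · rw [hmemJ]
        push_neg
        exact ⟨fun h => by omega, fun h => by have := hK _ h; omega⟩
      · rw [hmemJ]
        push_neg
        exact ⟨fun _ => by omega, fun h => by have := hK _ h; omega⟩
    · have haK : a ∈ K := hsubK (Finset.mem_Icc.mpr ⟨le_refl a, hab⟩)
      have hbK : b ∈ K := hsubK (Finset.mem_Icc.mpr ⟨hab, le_refl b⟩)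
      have ha2 := hK a haK
      have hb2 := hK b hbK
      refine ⟨hsubK.trans Finset.subset_union_right, a, b, hab, rfl,
        hsubK.trans Finset.subset_union_right, ?_, ?_⟩
      · rw [hmemJ]
        push_neg
        exact ⟨fun _ => by omega, ha⟩
      · rw [hmemJ]
        push_neg
        exact ⟨fun _ => by omega, hb⟩

lemma W_union (m t : ℕ) (ht : 1 ≤ t) (K : Finset ℕ) (hK : ∀ x ∈ K, t+2 ≤ x) :
    W m (Finset.Icc 1 t ∪ K) = Nplus t m * W m K := by
  rw [W, W, maxBlocks_union t ht K hK, Finset.prod_insert]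
  · congr 2
    rw [Nat.card_Icc]
    omega
  · intro hmem
    rw [Finset.mem_filter, Finset.mem_powerset] at hmem
    have : (1:ℕ) ∈ K := hmem.1 (Finset.mem_Icc.mpr ⟨le_refl 1, ht⟩)
    have := hK 1 this
    omega

lemma sum_W_shift (m c k : ℕ) :
    ∑ K ∈ (Finset.Icc (1+c) (k+c)).powerset, W m K = G m k := by
  rw [G]
  apply Finset.sum_nbij' (i := fun K => K.image (· - c)) (j := fun K => K.image (· + c))
  · intro K hK
    rw [Finset.mem_powerset] at *
    intro x hx
    simp only [Finset.mem_image] at hx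
    obtain ⟨y, hy, rfl⟩ := hx
    have := hK hy
    rw [Finset.mem_Icc] at *
    omega
  · intro K hK
    rw [Finset.mem_powerset] at *
    intro x hx
    simp only [Finset.mem_image] at hx
    obtain ⟨y, hy, rfl⟩ := hx
    have := hK hy
    rw [Finset.mem_Icc] at *
    omega
  · intro K hK
    rw [Finset.mem_powerset] at hK
    ext x
    simp only [Finset.mem_image]
    constructor
    · rintro ⟨y, ⟨z, hz, rfl⟩, rfl⟩
      have := hK hz
      rw [Finset.mem_Icc] at this
      have hzz : z - c + c = z := by omega
      rw [hzz]
      exact hz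
    · intro hx
      have := hK hx
      rw [Finset.mem_Icc] at this
      exact ⟨x - c, ⟨x, hx, rfl⟩, by omega⟩
  · intro K hK
    rw [Finset.mem_powerset] at hK
    ext x
    simp only [Finset.mem_image]
    constructor
    · rintro ⟨y, ⟨z, hz, rfl⟩, rfl⟩
      have hzz : z + c - c = z := by omega
      rw [hzz]
      exact hz
    · intro hx
      exact ⟨x + c, ⟨x, hx, rfl⟩, by omega⟩
  · intro K hK
    rw [Finset.mem_powerset] at hK
    have h1 : ∀ x ∈ K.image (· - c), 1 ≤ x := by
      intro x hx
      simp only [Finset.mem_image] at hx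
      obtain ⟨y, hy, rfl⟩ := hx
      have := hK hy
      rw [Finset.mem_Icc] at this
      omega
    have h2 : (K.image (· - c)).image (· + c) = K := by
      ext x
      simp only [Finset.mem_image]
      constructor
      · rintro ⟨y, ⟨z, hz, rfl⟩, rfl⟩
        have := hK hz
        rw [Finset.mem_Icc] at this
        have hzz : z - c + c = z := by omega
        rw [hzz]
        exact hz
      · intro hx
        have := hK hx
        rw [Finset.mem_Icc] at this
        exact ⟨x - c, ⟨x, hx, rfl⟩, by omega⟩
    conv_lhs => rw [← h2]
    rw [W_image m (K.image (· - c)) h1 c]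

lemma fg_exists (J : Finset ℕ) : ∃ t, (t+1) ∉ J := by
  refine ⟨J.sup id, fun h => ?_⟩
  have := Finset.le_sup (f := id) h
  simp only [id] at this
  omega

noncomputable def fg (J : Finset ℕ) : ℕ := Nat.find (fg_exists J)

lemma fg_spec (J : Finset ℕ) : (fg J + 1) ∉ J := Nat.find_spec (fg_exists J)

lemma fg_min (J : Finset ℕ) {i : ℕ} (h : i < fg J) : (i+1) ∈ J := by
  have := Nat.find_min (fg_exists J) h
  simpa using this

lemma fg_eq (J : Finset ℕ) (t : ℕ) (h1 : (t+1) ∉ J) (h2 : ∀ i < t, (i+1) ∈ J) :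
    fg J = t := by
  rw [fg, Nat.find_eq_iff]
  exact ⟨h1, fun i hi => not_not_intro (h2 i hi)⟩

lemma fg_union (J : Finset ℕ) (hJ : ∀ x ∈ J, 1 ≤ x) :
    Finset.Icc 1 (fg J) ∪ (J \ Finset.Icc 1 (fg J + 1)) = J := by
  ext x
  simp only [Finset.mem_union, Finset.mem_sdiff, Finset.mem_Icc]
  constructor
  · rintro (⟨h1, h2⟩ | ⟨h, -⟩)
    · have : x - 1 < fg J := by omega
      have := fg_min J this
      rwa [show x - 1 + 1 = x from by omega] at this
    · exact h
  · intro hx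
    have hx1 := hJ x hx
    rcases Nat.lt_or_ge (fg J) x with h | h
    · right
      refine ⟨hx, ?_⟩
      rintro ⟨-, h2⟩
      have : x = fg J + 1 := by omega
      exact fg_spec J (this ▸ hx)
    · left; exact ⟨hx1, h⟩

lemma G_rec (m n : ℕ) (hm : 1 ≤ m) (hn : 1 ≤ n) :
    G m n = Nplus n m + ∑ t ∈ range n, Nplus t m * G m (n-1-t) := by
  have hstep : G m n = ∑ x ∈ (range (n+1)).sigma (fun t => (Finset.Icc (t+2) n).powerset),
      W m (Finset.Icc 1 x.1 ∪ x.2) := by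
    rw [G]
    apply Finset.sum_nbij' (i := fun J => (⟨fg J, J \ Finset.Icc 1 (fg J + 1)⟩ :
        Σ _ : ℕ, Finset ℕ)) (j := fun x => Finset.Icc 1 x.1 ∪ x.2)
    · intro J hJ
      rw [Finset.mem_powerset] at hJ
      simp only [Finset.mem_sigma, Finset.mem_range, Finset.mem_powerset]
      constructor
      · by_contra hc
        have : n < fg J := by omega
        have := fg_min J this
        have := hJ this
        rw [Finset.mem_Icc] at this
        omega
      · intro x hx
        rw [Finset.mem_sdiff, Finset.mem_Icc] at hx
        have := hJ hx.1
        rw [Finset.mem_Icc] at *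
        omega
    · rintro ⟨t, K⟩ hx
      dsimp only at hx ⊢
      simp only [Finset.mem_sigma, Finset.mem_range, Finset.mem_powerset] at hx
      rw [Finset.mem_powerset]
      intro y hy
      rw [Finset.mem_union] at hy
      rw [Finset.mem_Icc]
      rcases hy with h | h
      · rw [Finset.mem_Icc] at h; omega
      · have := hx.2 h
        rw [Finset.mem_Icc] at this; omega
    · intro J hJ
      rw [Finset.mem_powerset] at hJ
      exact fg_union J (fun x hx => by have := hJ hx; rw [Finset.mem_Icc] at this; omega)
    · rintro ⟨t, K⟩ hx
      simp only [Finset.mem_sigma, Finset.mem_range, Finset.mem_powerset] at hx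
      have h1 : fg (Finset.Icc 1 t ∪ K) = t := by
        apply fg_eq
        · rw [Finset.mem_union, Finset.mem_Icc]
          rintro (h | h)
          · omega
          · have := hx.2 h; rw [Finset.mem_Icc] at this; omega
        · intro i hi
          rw [Finset.mem_union, Finset.mem_Icc]
          left; omega
      have h2 : (Finset.Icc 1 t ∪ K) \ Finset.Icc 1 (t + 1) = K := by
        ext y
        simp only [Finset.mem_sdiff, Finset.mem_union, Finset.mem_Icc]
        constructor
        · rintro ⟨h | h, h2⟩
          · omega
          · exact h
        · intro hy
          have := hx.2 hy
          rw [Finset.mem_Icc] at this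
          exact ⟨Or.inr hy, by omega⟩
      simp only [Sigma.mk.inj_iff]
      refine ⟨h1, ?_⟩
      rw [h1, h2]
    · intro J hJ
      rw [Finset.mem_powerset] at hJ
      conv_lhs => rw [← fg_union J
        (fun x hx => by have := hJ hx; rw [Finset.mem_Icc] at this; omega)]
  rw [hstep, Finset.sum_sigma, Finset.sum_range_succ]
  have hlast : ∑ K ∈ (Finset.Icc (n+2) n).powerset, W m (Finset.Icc 1 n ∪ K)
      = Nplus n m := by
    rw [Finset.Icc_eq_empty (by omega), Finset.powerset_empty, Finset.sum_singleton]
    rw [Finset.union_empty, show Finset.Icc 1 n = Finset.Icc 1 n ∪ ∅ from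
      (Finset.union_empty _).symm]
    rw [W_union m n hn ∅ (by intro x hx; exact absurd hx (Finset.notMem_empty x)),
      W_empty, mul_one]
  rw [hlast]
  rw [add_comm]
  congr 1
  apply Finset.sum_congr rfl
  intro t ht
  rw [Finset.mem_range] at ht
  rcases Nat.eq_zero_or_pos t with rfl | ht1
  · have h0 : Finset.Icc 1 0 = (∅ : Finset ℕ) := by simp
    have : ∑ K ∈ (Finset.Icc (0+2) n).powerset, W m (Finset.Icc 1 0 ∪ K)
        = ∑ K ∈ (Finset.Icc (1+1) ((n-1)+1)).powerset, W m K := by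
      rw [show (1:ℕ)+1 = 0+2 from rfl, show (n-1)+1 = n from by omega]
      apply Finset.sum_congr rfl
      intro K _
      rw [h0, Finset.empty_union]
    rw [this, sum_W_shift]
    have hnp : Nplus 0 m = 1 := by rw [nplus_eq m 0 hm, Ran_zero]
    rw [hnp, one_mul, Nat.sub_zero]
  · have : ∑ K ∈ (Finset.Icc (t+2) n).powerset, W m (Finset.Icc 1 t ∪ K)
        = Nplus t m * ∑ K ∈ (Finset.Icc (t+2) n).powerset, W m K := by
      rw [Finset.mul_sum]
      apply Finset.sum_congr rfl
      intro K hK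
      rw [Finset.mem_powerset] at hK
      exact W_union m t ht1 K (fun x hx => by
        have := hK hx; rw [Finset.mem_Icc] at this; omega)
    rw [this]
    congr 1
    have : Finset.Icc (t+2) n = Finset.Icc (1+(t+1)) ((n-1-t)+(t+1)) := by
      congr 1
      · omega
      · omega
    rw [this, sum_W_shift]

lemma G_eq_ran (m : ℕ) (hm : 1 ≤ m) : ∀ n, G m n = Ran (m+1) (m+1) n := by
  intro n
  induction n using Nat.strong_induction_on with
  | _ n IH =>
  rcases Nat.eq_zero_or_pos n with rfl | hn
  · rw [G_zero, Ran_zero]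
  · rw [G_rec m n hm hn, ran_rec' m n hm hn]
    congr 1
    apply Finset.sum_congr rfl
    intro t ht
    rw [mem_range] at ht
    rw [IH (n-1-t) (by omega)]



/-- The Fuss number decomposes as a sum over subsets `J ⊆ {1, …, n}` (indexing the
parabolic subsystems of `A_n`) of the product of positive Fuss–Catalan numbers over
the maximal blocks of consecutive integers in `J`:
`(1/(n+1))·C((n+1)(m+1), n) = Σ_{J ⊆ {1,…,n}} Π_B N⁺(|B|, m)`. -/
theorem fuss_number_parabolic_decomposition (n m : ℕ) (hn : 1 ≤ n) (hm : 1 ≤ m) :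
    1 / ((n : ℚ) + 1) * (((n + 1) * (m + 1)).choose n : ℚ)
      = ∑ J ∈ (Finset.Icc 1 n).powerset,
          ∏ B ∈ J.powerset.filter (fun B => IsMaxBlock J B), Nplus B.card m := by
  have := fuss_eq n m
  rw [show (1:ℚ)/((n:ℚ)+1) * (((n+1)*(m+1)).choose n : ℚ) = Ran (m+1) (m+1) n from this]
  rw [← G_eq_ran m hm n]
  rfl
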